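/- arXiv:1810.04361 — 4 statements merged into one kernel-verified Lean document; each statement's English description precedes it below -/
import Mathlib

section
/- Let (X,d) be a finite metric space, C* a clustering of X, λ > 0, and suppose d is (α,β)-informative w.r.t. C* and λ with 0 ≤ α ≤ 1/2. Let K⁺ = {(x,y) ∈ X^{[2]} : d(x,y) ≤ λ and C*(x,y) = 1} be nonempty, and let T be the uniform distribution on K⁺ (the distribution induced by the sampling procedure P₁₁). Then for every labelling function h : X^{[2]} → {0,1}, |P_{(x,y)∼P⁺}[h(x,y) = 0] − P_{(x,y)∼T}[h(x,y) = 0]| ≤ 2α. -/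
open Finset

/-- A clustering of `X`, identified with its pair-labelling function:
`C x y = true` iff `x` and `y` lie in the same block. -/
def IsClustering {X : Type*} (C : X → X → Bool) : Prop :=
  (∀ x, C x x = true) ∧ (∀ x y, C x y = C y x) ∧
    (∀ x y z, C x y = true → C y z = true → C x z = true)

/-
Inside the positive pairs, `K⁺` is the event `d ≤ λ`, whose complement has relative size at
most `α`. Conditioning a uniform distribution on an event whose complement has mass `ε` moves the
probability of any event by at most `ε`: the numerator changes by at most the mass of the
complement, and the normalisation by the same amount. So the bound holds even with `α` in place
of `2α`.
-/

theorem abs_div_add_sub_div_le {A B k m : ℝ} (hk : 0 < k) (hm : 0 ≤ m) (hB : 0 ≤ B)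
    (hBk : B ≤ k) (hBA : B ≤ A) (hAB : A ≤ B + m) :
    |A / (k + m) - B / k| ≤ m / (k + m) := by
  have hkm : 0 < k + m := by linarith
  have hsplit : A / (k + m) - B / k = (A - B) / (k + m) - B / k * (m / (k + m)) := by
    field_simp
    ring
  have hgap : 0 ≤ m / (k + m) := div_nonneg hm hkm.le
  rw [hsplit]
  refine abs_sub_le_of_nonneg_of_le ?_ ?_ ?_ ?_
  · exact div_nonneg (sub_nonneg.mpr hBA) hkm.le
  · exact div_le_div_of_nonneg_right (by linarith) hkm.le
  · exact mul_nonneg (div_nonneg hB hk.le) hgap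
  · exact mul_le_of_le_one_left hgap ((div_le_one hk).mpr hBk)

theorem Finset.abs_card_filter_div_sub_card_filter_filter_div_le {ι : Type*} (t : Finset ι)
    (r q : ι → Prop) [DecidablePred r] [DecidablePred q] (hr : (t.filter r).Nonempty) :
    |(#(t.filter q) : ℝ) / #t - #((t.filter r).filter q) / #(t.filter r)| ≤
      #(t.filter (¬ r ·)) / #t := by
  have hsplit : (#(t.filter r) : ℝ) + #(t.filter (¬ r ·)) = #t := by
    exact_mod_cast card_filter_add_card_filter_not r
  have hsplit_q : #((t.filter r).filter q) + #((t.filter q).filter (¬ r ·)) = #(t.filter q) := by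
    rw [filter_comm]
    exact card_filter_add_card_filter_not r
  have hfar_q : #((t.filter q).filter (¬ r ·)) ≤ #(t.filter (¬ r ·)) :=
    card_le_card (filter_subset_filter _ (filter_subset _ _))
  have hBk : #((t.filter r).filter q) ≤ #(t.filter r) := card_le_card (filter_subset _ _)
  rw [← hsplit]
  refine abs_div_add_sub_div_le (by exact_mod_cast hr.card_pos) (Nat.cast_nonneg _)
    (Nat.cast_nonneg _) (by exact_mod_cast hBk) ?_ ?_
  · exact_mod_cast hsplit_q ▸ Nat.le_add_right _ _
  · exact_mod_cast hsplit_q ▸ Nat.add_le_add_left hfar_q _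

theorem stmt3_general {X : Type*} [MetricSpace X]
    (Cstar : X → X → Bool)
    (lam : ℝ)
    (Xsq : Finset (X × X))
    (pos : Finset (X × X)) (hpos : pos = Xsq.filter fun pr => Cstar pr.1 pr.2 = true)
    (K : Finset (X × X)) (hK : K = Xsq.filter fun pr => dist pr.1 pr.2 ≤ lam)
    (Kplus : Finset (X × X)) (hKplus : Kplus = K.filter fun pr => Cstar pr.1 pr.2 = true)
    (hne : Kplus.Nonempty)
    (α : ℝ) (hα0 : 0 ≤ α)
    -- `(α,β)`-informative: `P_{U²}[d(x,y) > λ | C*(x,y)=1] ≤ α`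
    (hinfα : ((pos.filter fun pr => lam < dist pr.1 pr.2).card : ℝ) / pos.card ≤ α) :
    ∀ h : X × X → Bool,
      |((pos.filter fun pr => h pr = false).card : ℝ) / pos.card -
        ((Kplus.filter fun pr => h pr = false).card : ℝ) / Kplus.card| ≤ 2 * α := by
  intro h
  have hKplus_eq : Kplus = pos.filter fun pr => dist pr.1 pr.2 ≤ lam := by
    simp only [hKplus, hK, hpos, filter_filter, and_comm]
  have hfar : (pos.filter fun pr => ¬ dist pr.1 pr.2 ≤ lam) =
      pos.filter fun pr => lam < dist pr.1 pr.2 := by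
    simp only [not_le]
  rw [hKplus_eq] at hne ⊢
  calc _ ≤ ((pos.filter fun pr => ¬ dist pr.1 pr.2 ≤ lam).card : ℝ) / pos.card :=
        pos.abs_card_filter_div_sub_card_filter_filter_div_le _ _ hne
    _ ≤ α := hfar ▸ hinfα
    _ ≤ 2 * α := by linarith

/-- Let `(X,d)` be a finite metric space, `C*` a clustering, `λ > 0`, and
suppose `d` is `(α,β)`-informative w.r.t. `C*` and `λ` with `0 ≤ α ≤ 1/2`. Let
`K⁺ = {(x,y) ∈ X^{[2]} : d(x,y) ≤ λ ∧ C*(x,y) = 1}` be nonempty and let `T` be the uniform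
distribution on `K⁺` (the distribution induced by procedure `P₁₁`). Then for every labelling
function `h : X^{[2]} → {0,1}`,
`|P_{(x,y)∼P⁺}[h(x,y)=0] − P_{(x,y)∼T}[h(x,y)=0]| ≤ 2α`. -/
theorem stmt3 {X : Type*} [Fintype X] [DecidableEq X] [MetricSpace X]
    (Cstar : X → X → Bool) (hC : IsClustering Cstar)
    (lam : ℝ) (hlam : 0 < lam)
    (Xsq : Finset (X × X)) (hXsq : Xsq = univ.filter fun pr => pr.1 ≠ pr.2)
    (pos : Finset (X × X)) (hpos : pos = Xsq.filter fun pr => Cstar pr.1 pr.2 = true)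
    (K : Finset (X × X)) (hK : K = Xsq.filter fun pr => dist pr.1 pr.2 ≤ lam)
    (Kplus : Finset (X × X)) (hKplus : Kplus = K.filter fun pr => Cstar pr.1 pr.2 = true)
    (hne : Kplus.Nonempty)
    (α β : ℝ) (hα0 : 0 ≤ α) (hα : α ≤ 1 / 2)
    -- `(α,β)`-informative: `P_{U²}[d(x,y) > λ | C*(x,y)=1] ≤ α` and
    -- `P_{U²}[C*(x,y)=1 | d(x,y) ≤ λ] ≥ β`
    (hinfα : ((pos.filter fun pr => lam < dist pr.1 pr.2).card : ℝ) / pos.card ≤ α)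
    (hinfβ : β ≤ (Kplus.card : ℝ) / K.card) :
    ∀ h : X × X → Bool,
      |((pos.filter fun pr => h pr = false).card : ℝ) / pos.card -
        ((Kplus.filter fun pr => h pr = false).card : ℝ) / Kplus.card| ≤ 2 * α :=
  stmt3_general Cstar lam Xsq pos hpos K hK Kplus hKplus hne α hα0 hinfα
end

section
/- Let X be a finite set and F = {C₁, ..., C_s} a finite class of clusterings of X, inducing the class ℱ = {C : X^{[2]} → {0,1} | C ∈ F} of pair-labelings. Then the VC dimension of ℱ is at most g(s), where g(s) is the smallest integer n such that B_{⌈√n⌉} ≥ s and B_k denotes the k-th Bell number, i.e. the number of partitions of a k-element set. Equivalently, every subset of X^{[2]} shattered by ℱ has size at most g(s). -/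
/-!
Shattering `n` pairs needs `2 ^ n` distinct clusterings, so `2 ^ n ≤ s`. On the other side
`s ≤ B_k` with `k = ⌈√g⌉`, and a partition of a `k`-set is determined by the set of unordered
pairs lying in a common block, so `B_k ≤ 2 ^ (k choose 2) ≤ 2 ^ g` because `k - 1 < √g`.
-/

open Finset

/-- A finite class `F` of clusterings (as pair-labelling functions) shatters a finite set `P`
of pairs if every `{0,1}`-labelling of `P` is realized by some member of `F`. -/
def Shatters {X : Type*} (F : Finset (X → X → Bool)) (P : Finset (X × X)) : Prop :=
  ∀ f : X × X → Bool, ∃ C ∈ F, ∀ pr ∈ P, C pr.1 pr.2 = f pr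

/-- The `k`-th Bell number: the number of partitions of a `k`-element set. -/
noncomputable def Bell (k : ℕ) : ℕ := Nat.card (Finpartition (Finset.univ : Finset (Fin k)))

theorem Shatters.two_pow_card_le {X : Type*} {F : Finset (X → X → Bool)} {P : Finset (X × X)}
    (h : Shatters F P) : 2 ^ P.card ≤ F.card := by
  classical
  calc 2 ^ P.card = (univ : Finset (P → Bool)).card := by simp
    _ ≤ F.card := by
      refine card_le_card_of_surjOn (fun C (p : P) => C p.1.1 p.1.2) fun b _ => ?_
      obtain ⟨C, hCF, hC⟩ := h fun pr => if hpr : pr ∈ P then b ⟨pr, hpr⟩ else false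
      exact ⟨C, hCF, funext fun p => by simp [hC p.1 p.2]⟩

namespace Finpartition

variable {α : Type*} [DecidableEq α] {s : Finset α}

theorem mem_parts_iff_exists_part_eq (P : Finpartition s) {t : Finset α} :
    t ∈ P.parts ↔ ∃ a ∈ s, P.part a = t :=
  ⟨fun ht => P.part_surjOn ht, fun ⟨_, ha, hat⟩ => hat ▸ P.part_mem.2 ha⟩

theorem ext_of_part_eq_part_iff {P Q : Finpartition s}
    (h : ∀ a ∈ s, ∀ b ∈ s, P.part a = P.part b ↔ Q.part a = Q.part b) : P = Q := by
  have hpart : ∀ a ∈ s, P.part a = Q.part a := fun a ha => by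
    ext b
    by_cases hb : b ∈ s
    · rw [P.mem_part_iff_part_eq_part hb ha, Q.mem_part_iff_part_eq_part hb ha]
      exact h b hb a ha
    · exact iff_of_false (fun h => hb (P.part_subset a h)) fun h => hb (Q.part_subset a h)
  ext t
  simp only [mem_parts_iff_exists_part_eq]
  exact exists_congr fun a => and_congr_right fun ha => by rw [hpart a ha]

def offDiagSameBlock [Fintype α] (P : Finpartition (univ : Finset α)) :
    Set {e : Sym2 α // ¬e.IsDiag} :=
  Subtype.val ⁻¹' Sym2.fromRel (r := fun a b => P.part a = P.part b) ⟨fun _ _ => Eq.symm⟩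

theorem offDiagSameBlock_injective [Fintype α] :
    Function.Injective (offDiagSameBlock (α := α)) := by
  intro P Q hPQ
  refine ext_of_part_eq_part_iff fun a _ b _ => ?_
  obtain rfl | hab := eq_or_ne a b
  · simp
  have hmem := Set.ext_iff.1 hPQ ⟨s(a, b), Sym2.mk_isDiag_iff.not.2 hab⟩
  simpa [offDiagSameBlock] using hmem

theorem card_le_two_pow_choose_two [Fintype α] :
    Nat.card (Finpartition (univ : Finset α)) ≤ 2 ^ (Fintype.card α).choose 2 := by
  calc Nat.card (Finpartition (univ : Finset α))
      ≤ Nat.card (Set {e : Sym2 α // ¬e.IsDiag}) :=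
        Nat.card_le_card_of_injective _ offDiagSameBlock_injective
    _ = 2 ^ (Fintype.card α).choose 2 := by
        rw [Nat.card_eq_fintype_card, Fintype.card_set, Sym2.card_subtype_not_diag]

end Finpartition

theorem bell_le_two_pow_choose_two (k : ℕ) : Bell k ≤ 2 ^ k.choose 2 := by
  unfold Bell
  simpa only [Fintype.card_fin] using Finpartition.card_le_two_pow_choose_two (α := Fin k)

theorem choose_two_ceil_sqrt_le (n : ℕ) : (⌈Real.sqrt n⌉₊).choose 2 ≤ n := by
  have hceil := Nat.ceil_lt_add_one (Real.sqrt_nonneg n)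
  set k := ⌈Real.sqrt n⌉₊
  clear_value k
  obtain hk | hk := lt_or_ge k 2
  · simp [Nat.choose_eq_zero_of_lt hk]
  have hlt : ((k - 1 : ℕ) : ℝ) < Real.sqrt n := by
    push_cast [Nat.cast_sub (by omega : 1 ≤ k)]
    linarith
  have hsq : (k - 1) ^ 2 < n := by exact_mod_cast (Real.lt_sqrt (Nat.cast_nonneg _)).1 hlt
  have hchoose : k.choose 2 ≤ (k - 1) ^ 2 := by
    obtain ⟨m, rfl⟩ := Nat.exists_eq_add_of_le' hk
    rw [Nat.choose_two_right]
    exact Nat.div_le_of_le_mul (show (m + 2) * (m + 1) ≤ 2 * (m + 1) ^ 2 by nlinarith)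
  omega

theorem stmt7_general {X : Type*}
    (F : Finset (X → X → Bool))
    (s : ℕ) (hs : s = F.card)
    (Xsq : Finset (X × X))
    (g : ℕ)
    -- `g` is the smallest integer `n` such that `B_{⌈√n⌉} ≥ s`
    (hg : s ≤ Bell ⌈Real.sqrt g⌉₊) :
    ∀ P ⊆ Xsq, Shatters F P → P.card ≤ g := by
  intro P _ hP
  refine (Nat.pow_le_pow_iff_right (by norm_num : 1 < 2)).1 ?_
  calc 2 ^ P.card ≤ F.card := hP.two_pow_card_le
    _ = s := hs.symm
    _ ≤ Bell ⌈Real.sqrt g⌉₊ := hg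
    _ ≤ 2 ^ (⌈Real.sqrt g⌉₊).choose 2 := bell_le_two_pow_choose_two _
    _ ≤ 2 ^ g := Nat.pow_le_pow_right two_pos (choose_two_ceil_sqrt_le g)

/-- For a finite set `X` and a finite class `F = {C₁, …, C_s}` of
clusterings of `X` inducing the class `ℱ` of pair-labelings, the VC dimension of `ℱ` is at
most `g(s)`, the smallest integer `n` such that `B_{⌈√n⌉} ≥ s` (where `B_k` is the `k`-th
Bell number); equivalently, every subset of `X^{[2]}` shattered by `ℱ` has size at most
`g(s)`. -/
theorem stmt7 {X : Type*} [Fintype X] [DecidableEq X]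
    (F : Finset (X → X → Bool)) (hF : ∀ C ∈ F, IsClustering C)
    (s : ℕ) (hs : s = F.card)
    (Xsq : Finset (X × X)) (hXsq : Xsq = univ.filter fun pr => pr.1 ≠ pr.2)
    (g : ℕ)
    -- `g` is the smallest integer `n` such that `B_{⌈√n⌉} ≥ s`
    (hg : s ≤ Bell ⌈Real.sqrt g⌉₊)
    (hgmin : ∀ n : ℕ, n < g → Bell ⌈Real.sqrt n⌉₊ < s) :
    ∀ P ⊆ Xsq, Shatters F P → P.card ≤ g :=
  stmt7_general F s hs Xsq g hg
end

section
/- Let G = (V, E) be a finite simple graph and p ≥ 1 an integer. For a partition C of V, define the correlation loss L_{d_E}(C) = NL(C) + PL(C), where NL(C) is the number of unordered pairs {x,y} of distinct vertices lying in the same block of C with {x,y} ∉ E, and PL(C) is the number of edges {x,y} ∈ E whose endpoints lie in different blocks of C. Then for every partition C of V all of whose blocks have size at most p: (i) L_{d_E}(C) ≥ |E| − |V|(p−1)/2; and (ii) equality holds if and only if every block of C induces a clique in G and has size exactly p. In particular, if some partition into cliques of size exactly p exists, it is the unique-type minimizer: every partition with maximum block size at most p that is not a partition into size-p cliques has strictly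 larger correlation loss. -/
/-!
Let `W` be the graph joining distinct vertices in the same block of `C`. Then `NL = |W \ E|` and
`PL = |E \ W|`, so `L = |E| - |W| + 2 NL`. Each vertex `v` has degree `|C.part v| - 1 ≤ p - 1`
in `W`, hence `|W| ≤ |V|(p-1)/2`, with equality iff all blocks have size `p`; and `NL = 0` iff
`W ≤ G`, i.e. iff every block is a clique.
-/

open Finset
open scoped Classical

/-- `NL(C)`: the number of unordered pairs of distinct vertices lying in the same block of
the partition `C` that are not edges of `G`. -/
noncomputable def NL {V : Type*} [Fintype V] [DecidableEq V] (G : SimpleGraph V)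
    [DecidableRel G.Adj] (C : Finpartition (Finset.univ : Finset V)) : ℕ :=
  ((Finset.univ : Finset (Sym2 V)).filter fun e =>
    ¬ e.IsDiag ∧ (∃ B ∈ C.parts, ∀ x ∈ e, x ∈ B) ∧ e ∉ G.edgeFinset).card

/-- `PL(C)`: the number of edges of `G` whose endpoints lie in different blocks of `C`. -/
noncomputable def PL {V : Type*} [Fintype V] [DecidableEq V] (G : SimpleGraph V)
    [DecidableRel G.Adj] (C : Finpartition (Finset.univ : Finset V)) : ℕ :=
  (G.edgeFinset.filter fun e => ¬ ∃ B ∈ C.parts, ∀ x ∈ e, x ∈ B).card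

/-- The correlation loss `L_{d_E}(C) = NL(C) + PL(C)`. -/
noncomputable def corrLoss {V : Type*} [Fintype V] [DecidableEq V] (G : SimpleGraph V)
    [DecidableRel G.Adj] (C : Finpartition (Finset.univ : Finset V)) : ℕ :=
  NL G C + PL G C

/-- A block `B` induces a clique in `G`. -/
def IsCliqueBlock {V : Type*} (G : SimpleGraph V) (B : Finset V) : Prop :=
  ∀ x ∈ B, ∀ y ∈ B, x ≠ y → G.Adj x y

namespace Finpartition

variable {V : Type*} [Fintype V] [DecidableEq V] (C : Finpartition (univ : Finset V))

def sameBlockGraph : SimpleGraph V where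
  Adj x y := x ≠ y ∧ ∃ B ∈ C.parts, x ∈ B ∧ y ∈ B
  symm := ⟨fun _ _ ⟨hne, B, hB, hx, hy⟩ => ⟨hne.symm, B, hB, hy, hx⟩⟩
  loopless := ⟨fun _ h => h.1 rfl⟩

@[simp]
lemma sameBlockGraph_adj {x y : V} :
    C.sameBlockGraph.Adj x y ↔ x ≠ y ∧ ∃ B ∈ C.parts, x ∈ B ∧ y ∈ B :=
  Iff.rfl

lemma mem_edgeFinset_sameBlockGraph (e : Sym2 V) :
    e ∈ C.sameBlockGraph.edgeFinset ↔ ¬ e.IsDiag ∧ ∃ B ∈ C.parts, ∀ x ∈ e, x ∈ B := by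
  induction e using Sym2.ind with
  | _ x y =>
    simp only [SimpleGraph.mem_edgeFinset, SimpleGraph.mem_edgeSet, sameBlockGraph_adj,
      Sym2.mk_isDiag_iff, Sym2.mem_iff, forall_eq_or_imp, forall_eq]

lemma neighborFinset_sameBlockGraph (v : V) :
    C.sameBlockGraph.neighborFinset v = (C.part v).erase v := by
  ext x
  simp only [SimpleGraph.mem_neighborFinset, mem_erase, mem_part_iff_exists,
    sameBlockGraph_adj]
  exact ⟨fun ⟨hne, B, hB, hv, hx⟩ => ⟨hne.symm, B, hB, hx, hv⟩,
    fun ⟨hne, B, hB, hx, hv⟩ => ⟨Ne.symm hne, B, hB, hv, hx⟩⟩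

lemma degree_sameBlockGraph (v : V) :
    C.sameBlockGraph.degree v = (C.part v).card - 1 := by
  rw [← SimpleGraph.card_neighborFinset_eq_degree, neighborFinset_sameBlockGraph,
    card_erase_of_mem (C.mem_part (mem_univ v))]

lemma two_mul_card_edgeFinset_sameBlockGraph :
    2 * (C.sameBlockGraph.edgeFinset.card : ℝ) = ∑ v, (((C.part v).card : ℝ) - 1) := by
  have hpos (v : V) : 1 ≤ (C.part v).card := card_pos.2 ⟨v, C.mem_part (mem_univ v)⟩
  rw [← Nat.cast_ofNat, ← Nat.cast_mul, ← C.sameBlockGraph.sum_degrees_eq_twice_card_edges]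
  push_cast [degree_sameBlockGraph, Nat.cast_sub (hpos _)]
  rfl

lemma forall_part_iff {P : Finset V → Prop} : (∀ v, P (C.part v)) ↔ ∀ B ∈ C.parts, P B :=
  ⟨fun h B hB => by
    obtain ⟨v, hv⟩ := C.nonempty_of_mem_parts hB
    exact C.part_eq_of_mem hB hv ▸ h v,
  fun h v => h _ (C.part_mem.2 (mem_univ v))⟩

lemma sameBlockGraph_le_iff {G : SimpleGraph V} :
    C.sameBlockGraph ≤ G ↔ ∀ B ∈ C.parts, IsCliqueBlock G B :=
  ⟨fun h B hB _ hx _ hy hxy => h ⟨hxy, B, hB, hx, hy⟩,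
    fun h _ _ ⟨hxy, B, hB, hx, hy⟩ => h B hB _ hx _ hy hxy⟩

variable {C} {p : ℕ} (hC : ∀ B ∈ C.parts, B.card ≤ p)
include hC

lemma two_mul_card_edgeFinset_sameBlockGraph_le :
    2 * (C.sameBlockGraph.edgeFinset.card : ℝ) ≤ Fintype.card V * ((p : ℝ) - 1) := by
  rw [two_mul_card_edgeFinset_sameBlockGraph, ← nsmul_eq_mul, ← card_univ, ← sum_const]
  gcongr with v
  exact_mod_cast hC _ (C.part_mem.2 (mem_univ v))

lemma two_mul_card_edgeFinset_sameBlockGraph_eq_iff :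
    2 * (C.sameBlockGraph.edgeFinset.card : ℝ) = Fintype.card V * ((p : ℝ) - 1) ↔
      ∀ B ∈ C.parts, B.card = p := by
  rw [two_mul_card_edgeFinset_sameBlockGraph, ← nsmul_eq_mul, ← card_univ, ← sum_const,
    sum_eq_sum_iff_of_le fun v _ => by
      gcongr; exact_mod_cast hC _ (C.part_mem.2 (mem_univ v)), ← C.forall_part_iff]
  simp

end Finpartition

section CorrelationLoss

variable {V : Type*} [Fintype V] [DecidableEq V] (G : SimpleGraph V) [DecidableRel G.Adj]
  (C : Finpartition (univ : Finset V))

lemma NL_eq_card_sdiff : NL G C = (C.sameBlockGraph.edgeFinset \ G.edgeFinset).card := by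
  unfold NL
  congr 1
  ext e
  simp only [mem_filter, mem_univ, true_and, mem_sdiff, Finpartition.mem_edgeFinset_sameBlockGraph,
    and_assoc]

lemma PL_eq_card_sdiff : PL G C = (G.edgeFinset \ C.sameBlockGraph.edgeFinset).card := by
  unfold PL
  congr 1
  ext e
  simp only [mem_filter, mem_sdiff, Finpartition.mem_edgeFinset_sameBlockGraph]
  exact and_congr_right fun he => by
    rw [and_iff_right (G.not_isDiag_of_mem_edgeSet (SimpleGraph.mem_edgeFinset.1 he))]

lemma corrLoss_add_card_edgeFinset_sameBlockGraph :
    corrLoss G C + C.sameBlockGraph.edgeFinset.card = G.edgeFinset.card + 2 * NL G C := by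
  have hW := card_sdiff_add_card_inter C.sameBlockGraph.edgeFinset G.edgeFinset
  have hE := card_sdiff_add_card_inter G.edgeFinset C.sameBlockGraph.edgeFinset
  rw [inter_comm] at hE
  rw [corrLoss, NL_eq_card_sdiff, PL_eq_card_sdiff]
  omega

lemma NL_eq_zero_iff : NL G C = 0 ↔ ∀ B ∈ C.parts, IsCliqueBlock G B := by
  rw [NL_eq_card_sdiff, card_eq_zero, sdiff_eq_empty_iff_subset,
    SimpleGraph.edgeFinset_subset_edgeFinset, Finpartition.sameBlockGraph_le_iff]

lemma corrLoss_ge_and_eq_iff {p : ℕ} (hC : ∀ B ∈ C.parts, B.card ≤ p) :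
    (corrLoss G C : ℝ) ≥ G.edgeFinset.card - Fintype.card V * ((p : ℝ) - 1) / 2 ∧
      ((corrLoss G C : ℝ) = G.edgeFinset.card - Fintype.card V * ((p : ℝ) - 1) / 2 ↔
        ∀ B ∈ C.parts, B.card = p ∧ IsCliqueBlock G B) := by
  have hL : (corrLoss G C : ℝ) + C.sameBlockGraph.edgeFinset.card =
      G.edgeFinset.card + 2 * NL G C := by
    exact_mod_cast corrLoss_add_card_edgeFinset_sameBlockGraph G C
  have hW := Finpartition.two_mul_card_edgeFinset_sameBlockGraph_le hC
  have hNL : (0 : ℝ) ≤ NL G C := Nat.cast_nonneg _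
  refine ⟨by linarith, ?_⟩
  simp only [forall_and, ← Finpartition.two_mul_card_edgeFinset_sameBlockGraph_eq_iff hC,
    ← NL_eq_zero_iff, ← Nat.cast_eq_zero (R := ℝ)]
  constructor
  · intro h
    constructor <;> linarith
  · rintro ⟨hW, hNL⟩
    linarith

end CorrelationLoss

theorem stmt12_general {V : Type*} [Fintype V] [DecidableEq V] (G : SimpleGraph V)
    [DecidableRel G.Adj] (p : ℕ) :
    (∀ C : Finpartition (Finset.univ : Finset V), (∀ B ∈ C.parts, B.card ≤ p) →
      ((corrLoss G C : ℝ) ≥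
          (G.edgeFinset.card : ℝ) - (Fintype.card V : ℝ) * ((p : ℝ) - 1) / 2 ∧
       ((corrLoss G C : ℝ) =
          (G.edgeFinset.card : ℝ) - (Fintype.card V : ℝ) * ((p : ℝ) - 1) / 2 ↔
          ∀ B ∈ C.parts, B.card = p ∧ IsCliqueBlock G B))) ∧
    ((∃ C₀ : Finpartition (Finset.univ : Finset V),
        ∀ B ∈ C₀.parts, B.card = p ∧ IsCliqueBlock G B) →
      ∀ C : Finpartition (Finset.univ : Finset V), (∀ B ∈ C.parts, B.card ≤ p) →
        ¬ (∀ B ∈ C.parts, B.card = p ∧ IsCliqueBlock G B) →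
        (corrLoss G C : ℝ) >
          (G.edgeFinset.card : ℝ) - (Fintype.card V : ℝ) * ((p : ℝ) - 1) / 2) := by
  refine ⟨fun C hC => corrLoss_ge_and_eq_iff G C hC, fun _ C hC hne => ?_⟩
  obtain ⟨hge, heq⟩ := corrLoss_ge_and_eq_iff G C hC
  exact lt_of_le_of_ne hge fun h => hne (heq.1 h.symm)

/-- Let `G = (V,E)` be a finite simple graph and `p ≥ 1`. For every
partition `C` of `V` all of whose blocks have size at most `p`:
(i) `L_{d_E}(C) ≥ |E| - |V|(p-1)/2`; and (ii) equality holds iff every block of `C` induces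
a clique of size exactly `p`. In particular, if some partition into cliques of size exactly
`p` exists, then every partition with maximum block size at most `p` that is not a partition
into size-`p` cliques has strictly larger correlation loss. -/
theorem stmt12 {V : Type*} [Fintype V] [DecidableEq V] (G : SimpleGraph V)
    [DecidableRel G.Adj] (p : ℕ) (hp : 1 ≤ p) :
    (∀ C : Finpartition (Finset.univ : Finset V), (∀ B ∈ C.parts, B.card ≤ p) →
      ((corrLoss G C : ℝ) ≥
          (G.edgeFinset.card : ℝ) - (Fintype.card V : ℝ) * ((p : ℝ) - 1) / 2 ∧
       ((corrLoss G C : ℝ) =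
          (G.edgeFinset.card : ℝ) - (Fintype.card V : ℝ) * ((p : ℝ) - 1) / 2 ↔
          ∀ B ∈ C.parts, B.card = p ∧ IsCliqueBlock G B))) ∧
    ((∃ C₀ : Finpartition (Finset.univ : Finset V),
        ∀ B ∈ C₀.parts, B.card = p ∧ IsCliqueBlock G B) →
      ∀ C : Finpartition (Finset.univ : Finset V), (∀ B ∈ C.parts, B.card ≤ p) →
        ¬ (∀ B ∈ C.parts, B.card = p ∧ IsCliqueBlock G B) →
        (corrLoss G C : ℝ) >
          (G.edgeFinset.card : ℝ) - (Fintype.card V : ℝ) * ((p : ℝ) - 1) / 2) :=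
  stmt12_general G p
end

section
/- Fix an integer k ≥ 2 and let a₁,...,a_k, b₁,...,b_k, c₁,...,c_k, c′₁,...,c′_k be 4k distinct elements. Consider the 2k triples e_i = {a_i, b_i, c_i} and f_i = {a_{i+1 mod k}, b_i, c′_i} for 1 ≤ i ≤ k (indices of a taken cyclically). Then a subfamily M′ ⊆ {e₁,...,e_k, f₁,...,f_k} covers each element a₁,...,a_k exactly once and each element b₁,...,b_k exactly once if and only if M′ = {e₁,...,e_k} or M′ = {f₁,...,f_k}. (This is the truth-setting gadget in the reduction from 3-SAT to 3-dimensional matching: selecting all e_i corresponds to assigning the literal true, and selecting all f_i corresponds to assigning it false.) -/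
/-!
The triples `e₁, f₁, e₂, f₂, …, e_k, f_k` form a cycle in which two consecutive triples share
exactly one of the elements `aᵢ, bᵢ` (`bᵢ` lies in `eᵢ` and `fᵢ` only, `aᵢ₊₁` in `fᵢ` and
`eᵢ₊₁` only). Covering each of these elements exactly once means choosing exactly one triple of
every consecutive pair, so the choices alternate around the cycle: `M′` consists of all the `eᵢ`
or of all the `fᵢ`.
-/

open Finset

theorem Finset.card_filter_eq_one_iff {β : Type*} [DecidableEq β] {M : Finset β}
    {p : β → Prop} [DecidablePred p] {s t : β} (hst : s ≠ t) (hs : p s) (ht : p t)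
    (hp : ∀ u ∈ M, p u → u = s ∨ u = t) :
    #(M.filter p) = 1 ↔ (s ∈ M ↔ t ∉ M) := by
  have : M.filter p = ({s, t} : Finset β).filter (· ∈ M) := by
    ext u
    simp only [mem_filter, mem_insert, mem_singleton]
    refine ⟨fun ⟨hu, hpu⟩ => ⟨hp u hu hpu, hu⟩, ?_⟩
    rintro ⟨rfl | rfl, hu⟩
    exacts [⟨hu, hs⟩, ⟨hu, ht⟩]
  rw [this]
  by_cases hsM : s ∈ M <;> by_cases htM : t ∈ M <;>
    simp [filter_insert, filter_singleton, hsM, htM, hst]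

theorem Fin.iff_zero_of_forall_add_one_iff {n : ℕ} [NeZero n] {P : Fin n → Prop}
    (h : ∀ i, P (i + 1) ↔ P i) (i : Fin n) : P i ↔ P 0 := by
  obtain ⟨n, rfl⟩ := Nat.exists_eq_add_one_of_ne_zero (NeZero.ne n)
  induction i using Fin.induction with
  | zero => rfl
  | succ i ih => rw [← Fin.coeSucc_eq_succ, h, ih]

theorem Finset.eq_image_of_subset_image_union {ι β : Type*} [Fintype ι] [DecidableEq β]
    {G H : ι → β} {M : Finset β} (hM : M ⊆ image G univ ∪ image H univ)
    (hG : ∀ i, G i ∈ M) (hH : ∀ i, H i ∉ M) : M = image G univ := by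
  refine Subset.antisymm (fun u hu => ?_) (image_subset_iff.2 fun i _ => hG i)
  obtain ⟨i, -, rfl⟩ | ⟨i, -, rfl⟩ := mem_union.1 (hM hu) |>.imp mem_image.1 mem_image.1
  · exact mem_image_of_mem G (mem_univ i)
  · exact absurd hu (hH i)

theorem card_filter_mem_eq_one_iff {ι α : Type*} [Fintype ι] [DecidableEq α]
    {E F : ι → Finset α} {M : Finset (Finset α)} (hM : M ⊆ image E univ ∪ image F univ)
    (hEF : ∀ i j, E i ≠ F j) {z : α} {s t : ι} (hzE : ∀ i, z ∈ E i ↔ i = s)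
    (hzF : ∀ i, z ∈ F i ↔ i = t) :
    #(M.filter fun u => z ∈ u) = 1 ↔ (E s ∈ M ↔ F t ∉ M) := by
  refine card_filter_eq_one_iff (hEF s t) ((hzE s).2 rfl) ((hzF t).2 rfl) fun u hu hzu => ?_
  obtain ⟨i, -, rfl⟩ | ⟨i, -, rfl⟩ := mem_union.1 (hM hu) |>.imp mem_image.1 mem_image.1
  · exact .inl ((hzE i).1 hzu ▸ rfl)
  · exact .inr ((hzF i).1 hzu ▸ rfl)

section Cycle

variable {k : ℕ} [NeZero k]

theorem alternates_iff_eq_image_or_eq_image {β : Type*} [DecidableEq β] {E F : Fin k → β}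
    {M : Finset β} (hM : M ⊆ image E univ ∪ image F univ) (hEF : ∀ i j, E i ≠ F j) :
    ((∀ j, E j ∈ M ↔ F (j - 1) ∉ M) ∧ ∀ j, E j ∈ M ↔ F j ∉ M) ↔
      M = image E univ ∨ M = image F univ := by
  constructor
  · rintro ⟨hA, hB⟩
    have hF : ∀ j, F j ∈ M ↔ F 0 ∈ M := Fin.iff_zero_of_forall_add_one_iff fun j => by
      have hA' := hA (j + 1)
      rw [add_sub_cancel_right] at hA'
      have hB' := hB (j + 1)
      tauto
    by_cases h0 : F 0 ∈ M
    · right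
      exact eq_image_of_subset_image_union (hM.trans (union_comm _ _).subset)
        (fun j => (hF j).2 h0) (fun j hj => (hB j).1 hj ((hF j).2 h0))
    · left
      exact eq_image_of_subset_image_union hM (fun j => (hB j).2 (mt (hF j).1 h0))
        (fun j hj => h0 ((hF j).1 hj))
  · rintro (rfl | rfl) <;> simp [hEF, (hEF _ _).symm]

theorem exactlyOnce_iff_eq_image_or_eq_image {α : Type*} [DecidableEq α] {x y : Fin k → α}
    {E F : Fin k → Finset α} {M : Finset (Finset α)} (hM : M ⊆ image E univ ∪ image F univ)
    (hEF : ∀ i j, E i ≠ F j) (hxE : ∀ i j, x j ∈ E i ↔ i = j)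
    (hxF : ∀ i j, x j ∈ F i ↔ i = j - 1) (hyE : ∀ i j, y j ∈ E i ↔ i = j)
    (hyF : ∀ i j, y j ∈ F i ↔ i = j) :
    ((∀ j, #(M.filter fun u => x j ∈ u) = 1) ∧ ∀ j, #(M.filter fun u => y j ∈ u) = 1) ↔
      M = image E univ ∨ M = image F univ := by
  simp only [card_filter_mem_eq_one_iff hM hEF (hxE · _) (hxF · _),
    card_filter_mem_eq_one_iff hM hEF (hyE · _) (hyF · _)]
  exact alternates_iff_eq_image_or_eq_image hM hEF

end Cycle

/-- Fix `k ≥ 2` and `4k` distinct elements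
`a₁,…,a_k, b₁,…,b_k, c₁,…,c_k, c′₁,…,c′_k`. With the triples `e i = {a i, b i, c i}` and
`f i = {a (i+1 mod k), b i, c′ i}`, a subfamily `M′ ⊆ {e₁,…,e_k, f₁,…,f_k}` covers each
`a i` exactly once and each `b i` exactly once if and only if `M′ = {e₁,…,e_k}` or
`M′ = {f₁,…,f_k}`. -/
theorem stmt13 {α : Type*} [DecidableEq α] (k : ℕ) (hk : 2 ≤ k)
    (a b c c' : Fin k → α)
    -- the 4k elements are distinct
    (hdist : Function.Injective fun q : Fin k × Fin 4 =>
      match q.2 with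
      | 0 => a q.1
      | 1 => b q.1
      | 2 => c q.1
      | 3 => c' q.1)
    (e f : Fin k → Finset α)
    (he : ∀ i, e i = {a i, b i, c i})
    (hf : ∀ i, f i = {a (i + ⟨1, by omega⟩), b i, c' i})
    (M' : Finset (Finset α))
    (hM' : M' ⊆ Finset.image e Finset.univ ∪ Finset.image f Finset.univ) :
    ((∀ j : Fin k, (M'.filter fun t => a j ∈ t).card = 1) ∧
     (∀ j : Fin k, (M'.filter fun t => b j ∈ t).card = 1)) ↔
      (M' = Finset.image e Finset.univ ∨ M' = Finset.image f Finset.univ) := by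
  have : NeZero k := ⟨by omega⟩
  have hone : (⟨1, by omega⟩ : Fin k) = 1 := Fin.ext (Nat.mod_eq_of_lt hk).symm
  have distinct := fun i j r s => hdist.eq_iff (a := (i, r)) (b := (j, s))
  -- splitting over the 16 pairs of labels lets the `match` reduce to `a`, `b`, `c`, `c'`
  simp only [Prod.ext_iff, Fin.forall_fin_succ, Fin.isValue, Fin.succ_zero_eq_one,
    Fin.succ_one_eq_two, Fin.reduceSucc, IsEmpty.forall_iff, and_true, zero_ne_one, and_false,
    iff_false, Fin.reduceEq, Fin.succ_ne_zero] at distinct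
  refine exactlyOnce_iff_eq_image_or_eq_image hM' (fun i j h => ?_)
    (by simp [he, distinct, eq_comm]) (by simp [hf, hone, distinct, eq_sub_iff_add_eq, eq_comm])
    (by simp [he, distinct, eq_comm]) (by simp [hf, distinct, eq_comm])
  simpa [he, hf, distinct] using congrArg (c' j ∈ ·) h
end
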